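/- Let G be a mixed graph, C a vertex set, and suppose a path π between a ∈ A and b ∈ B is m-connecting given C with C disjoint from A∪B. Then π contains a subpath π' between some a' ∈ A and b' ∈ B all of whose intermediate vertices lie outside A∪B, and π' is m-connecting given C. -/

import Mathlib

structure MixedGraph (V : Type*) where
  dir : V → V → Prop
  bi : V → V → Prop
  bi_symm : ∀ {a b : V}, bi a b → bi b a

namespace MixedGraph

variable {V : Type*}

/-- A single edge traversal: a directed edge traversed forwards (`a → b`),
a directed edge traversed backwards (`a ← b`), or a bi-directed edge (`a ↔ b`). -/
inductive Step (G : MixedGraph V) : V → V → Type _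
  | fwd {a b : V} : G.dir a b → G.Step a b
  | bwd {a b : V} : G.dir b a → G.Step a b
  | bi  {a b : V} : G.bi a b → G.Step a b

/-- The edge has an arrowhead at its second endpoint. -/
def Step.arrowAtEnd {G : MixedGraph V} : {a b : V} → G.Step a b → Prop
  | _, _, .fwd _ => True
  | _, _, .bwd _ => False
  | _, _, .bi _ => True

/-- The edge has an arrowhead at its first endpoint. -/
def Step.arrowAtStart {G : MixedGraph V} : {a b : V} → G.Step a b → Prop
  | _, _, .fwd _ => False
  | _, _, .bwd _ => True
  | _, _, .bi _ => True

/-- Paths (possibly self-intersecting) in a mixed graph. -/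
inductive Walk (G : MixedGraph V) : V → V → Type _
  | nil {a : V} : G.Walk a a
  | cons {a b c : V} : G.Step a b → G.Walk b c → G.Walk a c

namespace Walk

variable {G : MixedGraph V}

def length : {a b : V} → G.Walk a b → ℕ
  | _, _, .nil => 0
  | _, _, .cons _ w => w.length + 1

def verts : {a b : V} → G.Walk a b → List V
  | a, _, .nil => [a]
  | a, _, .cons _ w => a :: w.verts

/-- The intermediate vertices of a walk. -/
def interm {a b : V} (w : G.Walk a b) : List V := w.verts.tail.dropLast

def append : {a b c : V} → G.Walk a b → G.Walk b c → G.Walk a c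
  | _, _, _, .nil, w' => w'
  | _, _, _, .cons s w, w' => .cons s (w.append w')

/-- Every intermediate vertex of the walk is a collider. -/
def IsPureCollider : {a b : V} → G.Walk a b → Prop
  | _, _, .nil => True
  | _, _, .cons _ .nil => True
  | _, _, .cons s (.cons t w) =>
      s.arrowAtEnd ∧ t.arrowAtStart ∧ (Walk.cons t w).IsPureCollider

/-- The walk is m-connecting given `C`: every non-collider on it is outside `C`
and every collider on it is in `C`. -/
def IsMConnecting (C : Set V) : {a b : V} → G.Walk a b → Prop
  | _, _, .nil => True
  | _, _, .cons _ .nil => True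
  | _, _, .cons (b := m) s (.cons t w) =>
      ((s.arrowAtEnd ∧ t.arrowAtStart) ↔ m ∈ C) ∧ (Walk.cons t w).IsMConnecting C

end Walk

variable (G : MixedGraph V)

/-- `A` and `B` are m-separated given `C`: no m-connecting walk given `C`
between a vertex of `A` and a vertex of `B`. -/
def MSep (A B C : Set V) : Prop :=
  ∀ a ∈ A, ∀ b ∈ B, ∀ w : G.Walk a b, ¬ w.IsMConnecting C

/-- `u` and `v` are joined by a pure-collider path (with at least one edge). -/
def ColliderConn (u v : V) : Prop :=
  ∃ w : G.Walk u v, 0 < w.length ∧ w.IsPureCollider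

/-- Vertices connected to `S` by a (possibly empty) path of bi-directed edges. -/
def district (S : Set V) : Set V :=
  {v | ∃ s ∈ S, Relation.ReflTransGen G.bi s v}

/-- Children of vertices in `S`. -/
def ch (S : Set V) : Set V := {v | ∃ a ∈ S, G.dir a v}

/-- Ancestors of `S` (including `S` itself). -/
def an (S : Set V) : Set V :=
  {v | ∃ s ∈ S, Relation.ReflTransGen G.dir v s}

/-- The subgraph induced by `W`: edges with both endpoints in `W`. -/
def induce (W : Set V) : MixedGraph V where
  dir a b := G.dir a b ∧ a ∈ W ∧ b ∈ W
  bi a b := G.bi a b ∧ a ∈ W ∧ b ∈ W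
  bi_symm h := ⟨G.bi_symm h.1, h.2.2, h.2.1⟩

/-- Separation in an undirected graph with adjacency `adj`: every path between
`A` and `B` intersects `C`, i.e. `B` is not reachable from `A` avoiding `C`. -/
def UndirSep (adj : V → V → Prop) (A B C : Set V) : Prop :=
  ∀ a ∈ A, ∀ b ∈ B, ¬ Relation.ReflTransGen (fun x y => adj x y ∧ y ∉ C) a b

inductive EdgeKind | fwd | bwd | bi
deriving DecidableEq

def Step.kind {G : MixedGraph V} : {a b : V} → G.Step a b → EdgeKind
  | _, _, .fwd _ => .fwd
  | _, _, .bwd _ => .bwd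
  | _, _, .bi _ => .bi

def Walk.kinds {G : MixedGraph V} : {a b : V} → G.Walk a b → List EdgeKind
  | _, _, .nil => []
  | _, _, .cons s w => s.kind :: w.kinds

end MixedGraph

/-!
Cut the walk at its first visit to `B`, then cut the part before that at its last visit to `A`;
the piece in between has no interior vertex in `A ∪ B`. Being m-connecting is a condition on
pairs of consecutive edges at interior vertices, so it passes to every subwalk.
-/

namespace MixedGraph.Walk

variable {V : Type*} {G : MixedGraph V}

theorem verts_ne_nil : ∀ {a b : V} (w : G.Walk a b), w.verts ≠ []
  | _, _, .nil => List.cons_ne_nil _ _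
  | _, _, .cons _ _ => List.cons_ne_nil _ _

theorem start_mem_verts {a b : V} (w : G.Walk a b) : a ∈ w.verts := by
  cases w <;> simp [verts]

theorem verts_append : ∀ {a b c : V} (w₁ : G.Walk a b) (w₂ : G.Walk b c),
    (w₁.append w₂).verts = w₁.verts.dropLast ++ w₂.verts
  | _, _, _, .nil, _ => by simp [append, verts]
  | _, _, _, .cons _ w, w₂ => by
      simp [append, verts, verts_append w w₂, List.dropLast_cons_of_ne_nil (verts_ne_nil w)]

theorem dropLast_verts_append {a b c : V} (w₁ : G.Walk a b) (w₂ : G.Walk b c) :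
    (w₁.append w₂).verts.dropLast = w₁.verts.dropLast ++ w₂.verts.dropLast := by
  rw [verts_append, List.dropLast_append_of_ne_nil (verts_ne_nil w₂)]

theorem append_assoc : ∀ {a b c d : V} (w₁ : G.Walk a b) (w₂ : G.Walk b c) (w₃ : G.Walk c d),
    (w₁.append w₂).append w₃ = w₁.append (w₂.append w₃)
  | _, _, _, _, .nil, _, _ => rfl
  | _, _, _, _, .cons s w, w₂, w₃ => congrArg (Walk.cons s) (append_assoc w w₂ w₃)

theorem mem_tail_of_mem_interm {a b : V} {w : G.Walk a b} {v : V} (h : v ∈ w.interm) :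
    v ∈ w.verts.tail :=
  List.dropLast_subset _ h

theorem mem_dropLast_of_mem_interm {a b : V} {w : G.Walk a b} {v : V} (h : v ∈ w.interm) :
    v ∈ w.verts.dropLast := by
  rw [interm, ← List.tail_dropLast] at h
  exact List.mem_of_mem_tail h

theorem IsMConnecting.of_cons {C : Set V} {a b c : V} {s : G.Step a b} :
    ∀ {w : G.Walk b c}, (Walk.cons s w).IsMConnecting C → w.IsMConnecting C
  | .nil, _ => trivial
  | .cons _ _, h => h.2

theorem IsMConnecting.of_append {C : Set V} : ∀ {a b c : V} {w₁ : G.Walk a b} {w₂ : G.Walk b c},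
    (w₁.append w₂).IsMConnecting C → w₁.IsMConnecting C ∧ w₂.IsMConnecting C
  | _, _, _, .nil, _, h => ⟨trivial, h⟩
  | _, _, _, .cons _ .nil, _, h => ⟨trivial, h.of_cons⟩
  | _, _, _, .cons _ (.cons _ _), _, h =>
      have ⟨hleft, hright⟩ := IsMConnecting.of_append h.2
      ⟨⟨h.1, hleft⟩, hright⟩

theorem exists_append_first_mem {S : Set V} {a b : V} (w : G.Walk a b) (hb : b ∈ S) :
    ∃ b' ∈ S, ∃ (p : G.Walk a b') (q : G.Walk b' b),
      w = p.append q ∧ ∀ v ∈ p.verts.dropLast, v ∉ S := by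
  induction w with
  | nil => exact ⟨_, hb, .nil, .nil, rfl, by simp [verts]⟩
  | @cons a _ _ s w ih =>
    by_cases ha : a ∈ S
    · exact ⟨a, ha, .nil, .cons s w, rfl, by simp [verts]⟩
    · obtain ⟨b', hb', p, q, rfl, hp⟩ := ih hb
      refine ⟨b', hb', .cons s p, q, rfl, fun v hv => ?_⟩
      rw [verts, List.dropLast_cons_of_ne_nil (verts_ne_nil p)] at hv
      rcases List.mem_cons.mp hv with rfl | hv
      exacts [ha, hp v hv]

theorem exists_append_last_mem {S : Set V} {a b : V} (w : G.Walk a b)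
    (hS : ∃ v ∈ w.verts, v ∈ S) :
    ∃ a' ∈ S, ∃ (p : G.Walk a a') (q : G.Walk a' b),
      w = p.append q ∧ ∀ v ∈ q.verts.tail, v ∉ S := by
  induction w with
  | nil => exact ⟨_, by simpa [verts] using hS, .nil, .nil, rfl, by simp [verts]⟩
  | @cons a _ _ s w ih =>
    by_cases hw : ∃ v ∈ w.verts, v ∈ S
    · obtain ⟨a', ha', p, q, rfl, hq⟩ := ih hw
      exact ⟨a', ha', .cons s p, q, rfl, hq⟩
    · push Not at hw
      obtain ⟨v, hv, hvS⟩ := hS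
      have ha : a ∈ S := by
        rcases List.mem_cons.mp hv with rfl | hv
        exacts [hvS, absurd hvS (hw v hv)]
      exact ⟨a, ha, .nil, .cons s w, rfl, hw⟩

end MixedGraph.Walk

theorem stmt_14_general {V : Type*} (G : MixedGraph V) (A B C : Set V)
    {a b : V} (ha : a ∈ A) (hb : b ∈ B) (w : G.Walk a b)
    (hw : w.IsMConnecting C) :
    ∃ a' ∈ A, ∃ b' ∈ B, ∃ (w₁ : G.Walk a a') (w' : G.Walk a' b') (w₂ : G.Walk b' b),
      w = w₁.append (w'.append w₂) ∧ (∀ v ∈ w'.interm, v ∉ A ∪ B) ∧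
      w'.IsMConnecting C := by
  obtain ⟨b', hb', p, w₂, rfl, hpB⟩ := w.exists_append_first_mem hb
  obtain ⟨a', ha', w₁, w', rfl, hw'A⟩ := p.exists_append_last_mem ⟨a, p.start_mem_verts, ha⟩
  rw [MixedGraph.Walk.append_assoc] at hw
  refine ⟨a', ha', b', hb', w₁, w', w₂, MixedGraph.Walk.append_assoc _ _ _, fun v hv => ?_,
    hw.of_append.2.of_append.1⟩
  have hvB : v ∉ B := hpB v <| by
    rw [MixedGraph.Walk.dropLast_verts_append]
    exact List.mem_append_right _ (MixedGraph.Walk.mem_dropLast_of_mem_interm hv)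
  simp [hw'A v (MixedGraph.Walk.mem_tail_of_mem_interm hv), hvB]

/-- An m-connecting walk between `A` and `B` contains an m-connecting subpath between
`A` and `B` all of whose intermediate vertices avoid `A ∪ B`. -/
theorem stmt_14 {V : Type*} (G : MixedGraph V) (A B C : Set V)
    (hAB : Disjoint A B) (hAC : Disjoint A C) (hBC : Disjoint B C)
    {a b : V} (ha : a ∈ A) (hb : b ∈ B) (w : G.Walk a b)
    (hw : w.IsMConnecting C) :
    ∃ a' ∈ A, ∃ b' ∈ B, ∃ (w₁ : G.Walk a a') (w' : G.Walk a' b') (w₂ : G.Walk b' b),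
      w = w₁.append (w'.append w₂) ∧ (∀ v ∈ w'.interm, v ∉ A ∪ B) ∧
      w'.IsMConnecting C :=
  stmt_14_general G A B C ha hb w hw
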